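/- arXiv:2309.10733 — 5 statements merged into one kernel-verified Lean document; each statement's English description precedes it below -/
import Mathlib

section
/- Let X be a set equipped with an extended pseudo-distance d : X × X → [0,∞], let A ⊆ X be nonempty, and let f : X → ℝ be bounded on A (f''A is bounded above and below) and satisfy f(x) = f(y) whenever x, y ∈ A and d(x,y) < ∞ (i.e. f is constant on each d-accessible component of A; this is the meaning of 'f has d-Lipschitz constant 0' under the paper's convention 0·∞ := ∞). Then there exist functions g_min, g_max : X → ℝ such that: (i) g_min = f = g_max on A, and inf_A f ≤ g_min ≤ g_max ≤ sup_A f on X; (ii) both g_min and g_max are constant on each d-accessible component of X, i.e. g(x) = g(y) whenever d(x,y) < ∞; (iii) every h : X → ℝ satisfying h = f on A, inf_A f ≤ h ≤ sup_A f on X, and h(x) = h(y) whenever d(x,y) < ∞, satisfies g_min ≤ h ≤ g_max pointwise. -/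
open Function Set

open scoped ENNReal

/-!
An extension that is constant on accessible components is determined on every component meeting
`A` (by the value of `f` there) and free on the others, subject only to the bounds `inf_A f` and
`sup_A f`. So the minimal and maximal extensions take the value of `f` on components meeting `A`
and the constant `inf_A f`, respectively `sup_A f`, on all other components.
-/

namespace Function

variable {α β γ : Type*} {f : α → β} {g : α → γ}

theorem extend_eq_or_eq_of_comp_eq {F : β → γ} (hF : F ∘ f = g) (e' : β → γ) (b : β) :
    extend f g e' b = F b ∨ extend f g e' b = e' b := by
  by_cases hb : ∃ a, f a = b
  · obtain ⟨a, rfl⟩ := hb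
    have hfac : g.FactorsThrough f := fun a₁ a₂ h => by rw [← hF, comp_apply, h, comp_apply]
    exact .inl ((hfac.extend_apply e' a).trans (congrFun hF a).symm)
  · exact .inr (extend_apply' g e' b hb)

end Function

def accessibleSetoid {X : Type*} (d : X → X → ℝ≥0∞) (hrefl : ∀ x, d x x = 0)
    (hsymm : ∀ x y, d x y = d y x) (htri : ∀ x y z, d x z ≤ d x y + d y z) : Setoid X where
  r x y := d x y < ⊤
  iseqv :=
    { refl x := by simp [hrefl]
      symm {x y} h := hsymm x y ▸ h
      trans {x y z} hxy hyz := (htri x y z).trans_lt (ENNReal.add_lt_top.2 ⟨hxy, hyz⟩) }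

namespace Setoid

variable {X β : Type*} (s : Setoid X) (A : Set X) (f : X → β)

/-- The extension of `f|_A` that is constant on `s`-classes and equals `c` on the classes
missing `A`. -/
noncomputable def extendConst (c : β) : X → β :=
  extend (fun a : A => Quotient.mk s a) (A.domRestrict f) (fun _ => c) ∘ Quotient.mk s

variable {s A f}

theorem extendConst_apply_of_mem (hf : ∀ x ∈ A, ∀ y ∈ A, s x y → f x = f y) (c : β) {x : X}
    (hx : x ∈ A) : s.extendConst A f c x = f x :=
  FactorsThrough.extend_apply (g := A.domRestrict f) (f := fun a : A => Quotient.mk s a)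
    (fun a b h => hf a a.2 b b.2 (Quotient.exact h)) (fun _ => c) ⟨x, hx⟩

theorem extendConst_apply_eq_of_rel (c : β) {x y : X} (h : s x y) :
    s.extendConst A f c x = s.extendConst A f c y :=
  congrArg (extend (fun a : A => Quotient.mk s a) (A.domRestrict f) fun _ => c) (Quotient.sound h)

theorem extendConst_mem_insert_image (c : β) (x : X) :
    s.extendConst A f c x ∈ insert c (f '' A) := by
  rcases range_extend_subset _ (A.domRestrict f) (fun _ => c) (mem_range_self (Quotient.mk s x))
    with hx | ⟨_, _, hx⟩
  · exact .inr (range_domRestrict f A ▸ hx)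
  · exact .inl hx.symm

theorem extendConst_eq_or_eq {h : X → β} (hA : ∀ x ∈ A, h x = f x)
    (hs : ∀ x y, s x y → h x = h y) (c : β) (x : X) :
    s.extendConst A f c x = h x ∨ s.extendConst A f c x = c :=
  extend_eq_or_eq_of_comp_eq (f := fun a : A => Quotient.mk s a) (F := Quotient.lift h hs)
    (funext fun a : A => hA a.1 a.2) (fun _ => c) ⟦x⟧

theorem extendConst_le [Preorder β] {h : X → β} (hA : ∀ x ∈ A, h x = f x)
    (hs : ∀ x y, s x y → h x = h y) {c : β} {x : X} (hc : c ≤ h x) :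
    s.extendConst A f c x ≤ h x :=
  (extendConst_eq_or_eq hA hs c x).elim (fun e => e.le) (fun e => e.trans_le hc)

theorem le_extendConst [Preorder β] {h : X → β} (hA : ∀ x ∈ A, h x = f x)
    (hs : ∀ x y, s x y → h x = h y) {c : β} {x : X} (hc : h x ≤ c) :
    h x ≤ s.extendConst A f c x :=
  (extendConst_eq_or_eq hA hs c x).elim (fun e => e.ge) (fun e => hc.trans_eq e.symm)

end Setoid

theorem mcShane_degenerate_general {X : Type*} (d : X → X → ℝ≥0∞)
    (hrefl : ∀ x, d x x = 0)
    (hsymm : ∀ x y, d x y = d y x)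
    (htri : ∀ x y z, d x z ≤ d x y + d y z)
    (A : Set X)
    (f : X → ℝ)
    (hbddA : BddAbove (f '' A)) (hbddB : BddBelow (f '' A))
    (hconst : ∀ x ∈ A, ∀ y ∈ A, d x y < ⊤ → f x = f y) :
    ∃ gmin gmax : X → ℝ,
      (∀ x ∈ A, gmin x = f x ∧ gmax x = f x) ∧
      (∀ x : X, sInf (f '' A) ≤ gmin x ∧ gmin x ≤ gmax x ∧ gmax x ≤ sSup (f '' A)) ∧
      (∀ x y : X, d x y < ⊤ → gmin x = gmin y) ∧
      (∀ x y : X, d x y < ⊤ → gmax x = gmax y) ∧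
      (∀ h : X → ℝ, (∀ x ∈ A, h x = f x) →
        (∀ x : X, sInf (f '' A) ≤ h x ∧ h x ≤ sSup (f '' A)) →
        (∀ x y : X, d x y < ⊤ → h x = h y) →
        ∀ x : X, gmin x ≤ h x ∧ h x ≤ gmax x) := by
  set s := accessibleSetoid d hrefl hsymm htri
  set I := sInf (f '' A)
  set S := sSup (f '' A)
  have hIS : I ≤ S := Real.sInf_le_sSup _ hbddB hbddA
  have hbounds : ∀ c ∈ Icc I S, ∀ x, s.extendConst A f c x ∈ Icc I S := fun c hc x =>
    insert_subset hc (fun y hy => ⟨csInf_le hbddB hy, le_csSup hbddA hy⟩)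
      (s.extendConst_mem_insert_image c x)
  have hext : ∀ c x, x ∈ A → s.extendConst A f c x = f x := fun c _ =>
    s.extendConst_apply_of_mem hconst c
  have hext_const : ∀ c x y, d x y < ⊤ → s.extendConst A f c x = s.extendConst A f c y :=
    fun c _ _ => s.extendConst_apply_eq_of_rel c
  have hbetween : ∀ h : X → ℝ, (∀ x ∈ A, h x = f x) → (∀ x, I ≤ h x ∧ h x ≤ S) →
      (∀ x y, d x y < ⊤ → h x = h y) →
      ∀ x, s.extendConst A f I x ≤ h x ∧ h x ≤ s.extendConst A f S x :=
    fun h hA hbdd hs x => ⟨s.extendConst_le hA hs (hbdd x).1, s.le_extendConst hA hs (hbdd x).2⟩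
  refine ⟨s.extendConst A f I, s.extendConst A f S, fun x hx => ⟨hext I x hx, hext S x hx⟩,
    fun x => ⟨(hbounds I ⟨le_rfl, hIS⟩ x).1, ?_, (hbounds S ⟨hIS, le_rfl⟩ x).2⟩, hext_const I,
    hext_const S, hbetween⟩
  exact (hbetween _ (hext S) (hbounds S ⟨hIS, le_rfl⟩) (hext_const S) x).1

/-- Degenerate case `L = 0` of the constrained McShane extension Lemma (Lemma 3.2):
a bounded function on `A` that is constant on each `d`-accessible component of `A`
admits a minimal and a maximal constrained extension constant on each
`d`-accessible component of `X`. -/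
theorem mcShane_degenerate {X : Type*} (d : X → X → ℝ≥0∞)
    (hrefl : ∀ x, d x x = 0)
    (hsymm : ∀ x y, d x y = d y x)
    (htri : ∀ x y z, d x z ≤ d x y + d y z)
    (A : Set X) (hA : A.Nonempty)
    (f : X → ℝ)
    (hbddA : BddAbove (f '' A)) (hbddB : BddBelow (f '' A))
    (hconst : ∀ x ∈ A, ∀ y ∈ A, d x y < ⊤ → f x = f y) :
    ∃ gmin gmax : X → ℝ,
      (∀ x ∈ A, gmin x = f x ∧ gmax x = f x) ∧
      (∀ x : X, sInf (f '' A) ≤ gmin x ∧ gmin x ≤ gmax x ∧ gmax x ≤ sSup (f '' A)) ∧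
      (∀ x y : X, d x y < ⊤ → gmin x = gmin y) ∧
      (∀ x y : X, d x y < ⊤ → gmax x = gmax y) ∧
      (∀ h : X → ℝ, (∀ x ∈ A, h x = f x) →
        (∀ x : X, sInf (f '' A) ≤ h x ∧ h x ≤ sSup (f '' A)) →
        (∀ x y : X, d x y < ⊤ → h x = h y) →
        ∀ x : X, gmin x ≤ h x ∧ h x ≤ gmax x) :=
  mcShane_degenerate_general d hrefl hsymm htri A f hbddA hbddB hconst
end

section
/- Let X be a set equipped with an extended pseudo-distance d : X × X → [0,∞] whose induced topology (the topology of the truncated pseudo-distance d ∧ 1, i.e. the pseudo-extended-metric topology) is separable, and let 𝒜 be a σ-algebra on X such that for every x₀ ∈ X the function x ↦ d(x, x₀), with values in [0,∞], is 𝒜-measurable. Then every d-Lipschitz real-valued function is 𝒜-measurable; that is, every f : X → ℝ for which there exists L ∈ [0,∞) with |f(x) − f(y)| ≤ L·d(x,y) whenever d(x,y) < ∞ is 𝒜-measurable. -/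
open MeasureTheory
open scoped ENNReal

/-- Corollary 3.4: on a separable pseudo-extended-metric space, if every function
`x ↦ edist x x₀` is measurable with respect to a σ-algebra `m`, then every
`d`-Lipschitz real-valued function is `m`-measurable. -/
theorem lipschitz_measurable {X : Type*} [PseudoEMetricSpace X]
    [TopologicalSpace.SeparableSpace X]
    (m : MeasurableSpace X)
    (hmeas : ∀ x₀ : X, Measurable[m] fun x => edist x x₀)
    (f : X → ℝ) (L : ℝ) (hL : 0 ≤ L)
    (hf : ∀ x y : X, edist x y < ⊤ → |f x - f y| ≤ L * (edist x y).toReal) :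
    Measurable[m] f := by
  -- every ball is m-measurable
  have hball : ∀ (s : X) (r : ℝ≥0∞), MeasurableSet[m] (EMetric.ball s r) := by
    intro s r
    have : EMetric.ball s r = (fun x => edist x s) ⁻¹' Set.Iio r := rfl
    rw [this]
    exact hmeas s measurableSet_Iio
  -- Borel σ-algebra is contained in m
  have hborel : borel X ≤ m := by
    rw [borel]
    apply MeasurableSpace.generateFrom_le
    intro U hU
    obtain ⟨D, hDc, hDd⟩ := TopologicalSpace.exists_countable_dense X
    set T : Set (X × ℚ) :=
      {p | p.1 ∈ D ∧ 0 < Real.toNNReal p.2 ∧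
        EMetric.ball p.1 (Real.toNNReal p.2) ⊆ U} with hT
    have hTc : T.Countable :=
      (hDc.prod (Set.countable_univ)).mono (by intro p hp; exact ⟨hp.1, trivial⟩)
    have hUeq : U = ⋃ p ∈ T, EMetric.ball p.1 (Real.toNNReal p.2) := by
      apply Set.Subset.antisymm
      · intro x hx
        obtain ⟨ε, hε, hεU⟩ := EMetric.isOpen_iff.1 hU x hx
        have hε2 : (0 : ℝ≥0∞) < ε / 2 := ENNReal.half_pos hε.ne'
        obtain ⟨q, _, hq0, hqε⟩ := ENNReal.lt_iff_exists_rat_btwn.1 hε2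
        obtain ⟨s, hsD, hxs⟩ := EMetric.mem_closure_iff.1 (hDd x) _ hq0
        have hsub : EMetric.ball s (Real.toNNReal q) ⊆ U := by
          intro y hy
          apply hεU
          have h1 : edist y x ≤ edist y s + edist s x := edist_triangle _ _ _
          have h2 : edist y s + edist s x < Real.toNNReal q + Real.toNNReal q := by
            exact ENNReal.add_lt_add hy (by rwa [edist_comm] at hxs)
          have h3 : (Real.toNNReal q : ℝ≥0∞) + Real.toNNReal q < ε := by
            calc (Real.toNNReal q : ℝ≥0∞) + Real.toNNReal q < ε / 2 + ε / 2 :=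
              ENNReal.add_lt_add hqε hqε
            _ = ε := ENNReal.add_halves ε
          exact lt_of_le_of_lt h1 (h2.trans h3)
        refine Set.mem_biUnion (show (s, q) ∈ T from ⟨hsD, ?_, hsub⟩) ?_
        · exact ENNReal.coe_pos.1 hq0
        · refine EMetric.mem_ball.2 ?_
          show edist x s < (Real.toNNReal q : ℝ≥0∞)
          exact hxs
      · intro x hx
        obtain ⟨p, hpT, hxp⟩ := Set.mem_iUnion₂.1 hx
        exact hpT.2.2 hxp
    rw [hUeq]
    exact MeasurableSet.biUnion hTc fun p _ => hball _ _
  -- f is Lipschitz with constant (L + 1)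
  have hlip : LipschitzWith (Real.toNNReal (L + 1)) f := by
    intro x y
    rcases eq_top_or_lt_top (edist x y) with h | h
    · rw [h, ENNReal.mul_top]
      · exact le_top
      · simp only [ne_eq, ENNReal.coe_eq_zero, Real.toNNReal_eq_zero, not_le]
        linarith
    · have h1 : |f x - f y| ≤ (L + 1) * (edist x y).toReal := by
        calc |f x - f y| ≤ L * (edist x y).toReal := hf x y h
        _ ≤ (L + 1) * (edist x y).toReal := by
          apply mul_le_mul_of_nonneg_right (by linarith) ENNReal.toReal_nonneg
      calc edist (f x) (f y) = ENNReal.ofReal |f x - f y| := by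
            rw [edist_dist, Real.dist_eq]
      _ ≤ ENNReal.ofReal ((L + 1) * (edist x y).toReal) :=
            ENNReal.ofReal_le_ofReal h1
      _ = ENNReal.ofReal (L + 1) * ENNReal.ofReal (edist x y).toReal :=
            ENNReal.ofReal_mul (by linarith)
      _ = (Real.toNNReal (L + 1) : ℝ≥0∞) * edist x y := by
            rw [ENNReal.ofReal_toReal h.ne]; rfl
  letI := m
  haveI : OpensMeasurableSpace X := ⟨hborel⟩
  exact hlip.continuous.measurable
end

section
/- Let X be a topological space and let d : X × X → [0,∞] be lower semicontinuous with respect to the product topology. Then for every compact subset K ⊆ X the function x ↦ d(x, K) := inf_{y ∈ K} d(x, y) (with value ∞ when K is empty) is lower semicontinuous on X; in particular it is Borel measurable. -/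
open scoped ENNReal

/-- Lemma 4.4: if `d : X × X → [0,∞]` is jointly lower semicontinuous, then for
every compact `K ⊆ X` the function `x ↦ d(x, K) = ⨅ y ∈ K, d x y` is lower
semicontinuous, and in particular Borel measurable. -/
theorem lowerSemicontinuous_edist_to_compact {X : Type*} [TopologicalSpace X]
    [MeasurableSpace X] [BorelSpace X]
    (d : X → X → ℝ≥0∞)
    (hlsc : LowerSemicontinuous fun p : X × X => d p.1 p.2)
    (K : Set X) (hK : IsCompact K) :
    LowerSemicontinuous (fun x => ⨅ y ∈ K, d x y) ∧
      Measurable (fun x => ⨅ y ∈ K, d x y) := by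
  have hl : LowerSemicontinuous (fun x => ⨅ y ∈ K, d x y) := by
    intro x c hc
    obtain ⟨c', hcc', hc'⟩ := exists_between hc
    have h1 : ∀ y ∈ K, ∀ᶠ p : X × X in nhds (x, y), c' < d p.1 p.2 := by
      intro y hy
      exact hlsc (x, y) c' (hc'.trans_le (iInf₂_le y hy))
    have h2 := hK.eventually_forall_of_forall_eventually
      (P := fun x' y => c' < d x' y) h1
    filter_upwards [h2] with x' hx'
    exact hcc'.trans_le (le_iInf₂ fun y hy => (hx' y hy).le)
  exact ⟨hl, hl.measurable⟩
end

section
/- Let (X, 𝒜) be a measurable space, let (Z, 𝒵, ν) be a probability space, and let (μ_ζ)_{ζ ∈ Z} be a family of nonzero measures on (X, 𝒜) such that ζ ↦ μ_ζ(A) is 𝒵-measurable for every A ∈ 𝒜. Let m be a probability measure on (X, 𝒜) disintegrated by this family, i.e. m(A) = ∫_Z μ_ζ(A) dν(ζ) for every A ∈ 𝒜, and assume the disintegration is separated: there exists a family (A_ζ)_{ζ ∈ Z} of pairwise disjoint m-measurable subsets of X such that μ_ζ(X \ A_ζ) = 0 for ν-almost every ζ ∈ Z. Then for every 𝒜-measurable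 function f : X → ℝ one has ‖f‖_{L^∞(m)} = ν-esssup_{ζ ∈ Z} ‖f‖_{L^∞(μ_ζ)}, where both essential supremum norms are computed in [0,∞] and the outer essential supremum is with respect to ν. -/
open MeasureTheory
open scoped ENNReal

/-- Lemma 6.2: for a separated disintegration `m = ∫ μ_ζ dν(ζ)` of a probability
measure, the `L^∞(m)` norm of a measurable function is the `ν`-essential supremum
of its `L^∞(μ_ζ)` norms. -/
theorem essSup_disintegration {X Z : Type*} [MeasurableSpace X] [MeasurableSpace Z]
    [MeasurableSpace.CountablyGenerated Z]
    (ν : Measure Z) [IsProbabilityMeasure ν]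
    (μ : Z → Measure X)
    (hμ0 : ∀ ζ, μ ζ ≠ 0)
    (hμmeas : ∀ A : Set X, MeasurableSet A → Measurable fun ζ => μ ζ A)
    (m : Measure X) [IsProbabilityMeasure m]
    (hdis : ∀ A : Set X, MeasurableSet A → m A = ∫⁻ ζ, μ ζ A ∂ν)
    (Aζ : Z → Set X)
    (hdisj : Pairwise fun ζ₁ ζ₂ => Disjoint (Aζ ζ₁) (Aζ ζ₂))
    (hAmeas : ∀ ζ, MeasureTheory.NullMeasurableSet (Aζ ζ) m)
    (hconeg : ∀ᵐ ζ ∂ν, μ ζ (Aζ ζ)ᶜ = 0)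
    (f : X → ℝ) (hf : Measurable f) :
    essSup (fun x => ENNReal.ofReal |f x|) m =
      essSup (fun ζ => essSup (fun x => ENNReal.ofReal |f x|) (μ ζ)) ν := by
  set g : X → ℝ≥0∞ := fun x => ENNReal.ofReal |f x| with hg
  have hgmeas : Measurable g := (hf.abs).ennreal_ofReal
  apply le_antisymm
  · set c := essSup (fun ζ => essSup g (μ ζ)) ν with hc
    have hset : MeasurableSet {x | c < g x} :=
      measurableSet_lt measurable_const hgmeas
    have h0 : m {x | c < g x} = 0 := by
      rw [hdis _ hset, lintegral_eq_zero_iff (hμmeas _ hset)]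
      filter_upwards [ae_le_essSup (f := fun ζ => essSup g (μ ζ)) (μ := ν)] with ζ hζ
      have h1 : ∀ᵐ x ∂μ ζ, ¬ c < g x :=
        (ae_le_essSup (f := g) (μ := μ ζ)).mono fun x hx => not_lt.2 (hx.trans hζ)
      simpa [ae_iff] using h1
    have : ∀ᵐ x ∂m, g x ≤ c := by
      rw [ae_iff]; simpa [not_le] using h0
    exact essSup_le_of_ae_le c this
  · set d := essSup g m with hd
    have hset : MeasurableSet {x | d < g x} :=
      measurableSet_lt measurable_const hgmeas
    have h0 : m {x | d < g x} = 0 := by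
      have h1 : ∀ᵐ x ∂m, ¬ d < g x :=
        (ae_le_essSup (f := g) (μ := m)).mono fun x hx => not_lt.2 hx
      simpa [ae_iff] using h1
    have h2 : (fun ζ => μ ζ {x | d < g x}) =ᵐ[ν] 0 := by
      rw [← lintegral_eq_zero_iff (hμmeas _ hset), ← hdis _ hset]; exact h0
    refine essSup_le_of_ae_le d ?_
    filter_upwards [h2] with ζ hζ
    have hζ' : μ ζ {x | ¬ g x ≤ d} = 0 := by simpa [not_le] using hζ
    exact essSup_le_of_ae_le d (ae_iff.mpr hζ')
end

section
/- Let X be a topological space, let d : X × X → [0,∞] be an extended pseudo-distance that is lower semicontinuous with respect to the product topology, and let m be a Borel measure on X. Let (K_i)_{i ∈ ℕ} be an increasing sequence of compact subsets of X with m(X \ ⋃_i K_i) = 0, and let ε ∈ (0,1] be such that κ_i := m({x ∈ X : d(x, K_i) < ε}) satisfies 1 ≤ κ_i < ∞ for every i. Then there exists a Borel function φ : X → [0,1] such that: (i) ∫_X φ² dm ≤ 1; (ii) φ is 1-Lipschitz with respect to d, i.e. |φ(x) − φ(y)| ≤ d(x,y) whenever d(x,y) < ∞; (iii) for every i, φ(x)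 ≥ 2^{−i−2}·ε/(3·√κ_i) > 0 for all x with d(x, K_i) < ε/3; in particular φ > 0 m-almost everywhere. -/
/-!
The distances `δ_i = d(·, K_i)` are lower semicontinuous by the tube lemma, hence Borel,
and `1`-Lipschitz for `d`. The bumps `g_i = S(3 δ_i / ε)` are `3/(2ε)`-Lipschitz, equal to `1`
on `{δ_i < ε/3}` and vanish off `A_i = {δ_i < ε}`. With weights
`c_i = 2^{-i-2} ε / (3 √κ_i) ≤ 2^{-i-2} ε / 3`, the series `φ = ∑ c_i g_i` is bounded by `ε/6`
and `1/4`-Lipschitz. Expanding `φ²` as a double series and using `g_i g_j ≤ 1_{A_i ∩ A_j}`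
with `m(A_i ∩ A_j) ≤ min(κ_i, κ_j) ≤ √(κ_i κ_j)` gives
`∫ φ² ≤ (∑ 2^{-i-2} ε / 3)² = (ε/6)²`.
-/

open MeasureTheory
open scoped ENNReal

theorem lowerSemicontinuous_biInf_of_isCompact {X Y α : Type*} [TopologicalSpace X]
    [TopologicalSpace Y] [CompleteLinearOrder α] [DenselyOrdered α] {f : X × Y → α}
    (hf : LowerSemicontinuous f) {K : Set Y} (hK : IsCompact K) :
    LowerSemicontinuous fun x => ⨅ y ∈ K, f (x, y) := by
  intro x c hc
  obtain ⟨c', hcc', hc'⟩ := exists_between hc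
  have hsub : {x} ×ˢ K ⊆ f ⁻¹' Set.Ioi c' := by
    rintro ⟨a, b⟩ ⟨rfl, hb⟩
    exact hc'.trans_le (iInf₂_le b hb)
  obtain ⟨u, v, hu, -, hxu, hKv, huv⟩ := generalized_tube_lemma isCompact_singleton hK
    (lowerSemicontinuous_iff_isOpen_preimage.mp hf c') hsub
  filter_upwards [hu.mem_nhds (hxu rfl)] with x' hx'
  exact hcc'.trans_le (le_iInf₂ fun y hy => (huv (Set.mk_mem_prod hx' (hKv hy))).le)

theorem biInf_le_add_biInf {X : Type*} {d : X → X → ℝ≥0∞}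
    (htri : ∀ x y z, d x z ≤ d x y + d y z) (K : Set X) (x y : X) :
    ⨅ z ∈ K, d x z ≤ d x y + ⨅ z ∈ K, d y z := by
  rw [iInf_subtype', iInf_subtype', ENNReal.add_iInf]
  exact le_iInf fun z => (iInf_le _ z).trans (htri x y z)

theorem ENNReal.abs_toReal_min_sub_toReal_min_le {a b c D : ℝ≥0∞} (hc : c ≠ ∞)
    (hD : D ≠ ∞) (hab : a ≤ b + D) (hba : b ≤ a + D) :
    |(min a c).toReal - (min b c).toReal| ≤ D.toReal := by
  have key : ∀ {a b}, a ≤ b + D → (min a c).toReal ≤ (min b c).toReal + D.toReal := by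
    intro a b h
    have hbc : min b c ≠ ∞ := ne_top_of_le_ne_top hc (min_le_right _ _)
    rw [← ENNReal.toReal_add hbc hD]
    refine ENNReal.toReal_mono (ENNReal.add_ne_top.2 ⟨hbc, hD⟩) ?_
    calc min a c ≤ min (b + D) (c + D) := min_le_min h le_self_add
      _ = min b c + D := min_add_add_right b c D
  rw [abs_sub_le_iff]
  constructor <;> linarith [key hab, key hba]

/-- The piecewise-linear cutoff `S` of the paper. -/
noncomputable def rampDown (t : ℝ) : ℝ := max 0 (min 1 ((3 - t) / 2))

theorem rampDown_mem_Icc (t : ℝ) : rampDown t ∈ Set.Icc 0 1 :=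
  ⟨le_max_left _ _, max_le zero_le_one (min_le_left _ _)⟩

theorem rampDown_eq_one {t : ℝ} (ht : t ≤ 1) : rampDown t = 1 := by
  rw [rampDown, min_eq_left (by linarith), max_eq_right zero_le_one]

theorem rampDown_eq_zero {t : ℝ} (ht : 3 ≤ t) : rampDown t = 0 := by
  rw [rampDown, min_eq_right (by linarith), max_eq_left (by linarith)]

theorem abs_rampDown_sub_le (s t : ℝ) : |rampDown s - rampDown t| ≤ |s - t| / 2 := by
  unfold rampDown
  calc |max 0 (min 1 ((3 - s) / 2)) - max 0 (min 1 ((3 - t) / 2))|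
      ≤ |min 1 ((3 - s) / 2) - min 1 ((3 - t) / 2)| := by
        rw [max_comm 0, max_comm 0]
        exact abs_max_sub_max_le_abs _ _ 0
    _ ≤ |(3 - s) / 2 - (3 - t) / 2| := by
        simpa using abs_min_sub_min_le_max 1 ((3 - s) / 2) 1 ((3 - t) / 2)
    _ = |s - t| / 2 := by
        rw [← abs_sub_comm, show (3 - t) / 2 - (3 - s) / 2 = (s - t) / 2 by ring, abs_div,
          abs_two]

theorem continuous_rampDown : Continuous rampDown := by
  unfold rampDown; fun_prop

/-- `S(3 t / ε)`. The truncation of `t` at `ε` matters only for `t = ∞`, which `toReal` would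
otherwise send to `0`, giving `1` instead of `0`. -/
noncomputable def bump (ε : ℝ) (t : ℝ≥0∞) : ℝ :=
  rampDown (3 * (min t (ENNReal.ofReal ε)).toReal / ε)

theorem bump_mem_Icc (ε : ℝ) (t : ℝ≥0∞) : bump ε t ∈ Set.Icc 0 1 := rampDown_mem_Icc _

theorem measurable_bump (ε : ℝ) : Measurable (bump ε) :=
  continuous_rampDown.measurable.comp
    (((measurable_id.min measurable_const).ennreal_toReal.const_mul 3).div_const ε)

theorem bump_eq_one {ε : ℝ} (hε : 0 < ε) {t : ℝ≥0∞} (ht : t < ENNReal.ofReal (ε / 3)) :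
    bump ε t = 1 := by
  have htε : t ≤ ENNReal.ofReal ε := ht.le.trans (ENNReal.ofReal_le_ofReal (by linarith))
  have ht' : t.toReal < ε / 3 := ENNReal.toReal_lt_of_lt_ofReal ht
  refine rampDown_eq_one ?_
  rw [min_eq_left htε, div_le_one hε]
  linarith

theorem bump_eq_zero {ε : ℝ} (hε : 0 < ε) {t : ℝ≥0∞} (ht : ENNReal.ofReal ε ≤ t) :
    bump ε t = 0 := by
  refine rampDown_eq_zero ?_
  rw [min_eq_right ht, ENNReal.toReal_ofReal hε.le, mul_div_cancel_right₀ _ hε.ne']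

theorem abs_bump_sub_le {ε : ℝ} (hε : 0 < ε) {s t D : ℝ≥0∞} (hD : D ≠ ∞)
    (hst : s ≤ t + D) (hts : t ≤ s + D) :
    |bump ε s - bump ε t| ≤ 3 / (2 * ε) * D.toReal := by
  set E := ENNReal.ofReal ε
  have htrunc := ENNReal.abs_toReal_min_sub_toReal_min_le (c := E) ENNReal.ofReal_ne_top hD hst hts
  calc |bump ε s - bump ε t|
      ≤ |3 * (min s E).toReal / ε - 3 * (min t E).toReal / ε| / 2 := abs_rampDown_sub_le _ _
    _ = 3 / (2 * ε) * |(min s E).toReal - (min t E).toReal| := by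
        rw [← sub_div, ← mul_sub, abs_div, abs_mul, abs_of_pos hε, abs_of_pos three_pos]
        field_simp
    _ ≤ 3 / (2 * ε) * D.toReal := by gcongr

theorem ofReal_mul_bump_le_indicator {X : Type*} {ε : ℝ} (hε : 0 < ε) {c : ℝ} (hc : 0 ≤ c)
    (f : X → ℝ≥0∞) (x : X) :
    ENNReal.ofReal (c * bump ε (f x)) ≤
      {x | f x < ENNReal.ofReal ε}.indicator (fun _ => ENNReal.ofReal c) x := by
  by_cases hx : f x < ENNReal.ofReal ε
  · rw [Set.indicator_of_mem (s := {x | f x < ENNReal.ofReal ε}) hx]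
    exact ENNReal.ofReal_le_ofReal (mul_le_of_le_one_right hc (bump_mem_Icc _ _).2)
  · rw [Set.indicator_of_notMem (s := {x | f x < ENNReal.ofReal ε}) hx,
      bump_eq_zero hε (not_lt.1 hx), mul_zero, ENNReal.ofReal_zero]

theorem hasSum_two_zpow_neg_sub_two :
    HasSum (fun i : ℕ => (2 : ℝ) ^ (-(i : ℤ) - 2)) (1 / 2) := by
  have h (i : ℕ) : (2 : ℝ) ^ (-(i : ℤ) - 2) = 1 / 4 * (1 / 2) ^ i := by
    rw [sub_eq_add_neg, zpow_add₀ two_ne_zero, zpow_neg, zpow_natCast, ← inv_pow]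
    norm_num [mul_comm]
  rw [funext h]
  have h2 := hasSum_geometric_two.mul_left (1 / 4 : ℝ)
  rwa [show (1 / 4 : ℝ) * 2 = 1 / 2 by norm_num] at h2

section WeightedSum

variable {ι : Type*} {c u v : ι → ℝ}

theorem summable_mul_of_mem_Icc (hc : Summable c) (hc0 : ∀ i, 0 ≤ c i)
    (hu : ∀ i, u i ∈ Set.Icc 0 1) : Summable fun i => c i * u i :=
  hc.of_nonneg_of_le (fun i => mul_nonneg (hc0 i) (hu i).1)
    fun i => mul_le_of_le_one_right (hc0 i) (hu i).2

theorem tsum_mul_mem_Icc (hc : Summable c) (hc0 : ∀ i, 0 ≤ c i)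
    (hu : ∀ i, u i ∈ Set.Icc 0 1) : ∑' i, c i * u i ∈ Set.Icc 0 (∑' i, c i) :=
  ⟨tsum_nonneg fun i => mul_nonneg (hc0 i) (hu i).1,
    (summable_mul_of_mem_Icc hc hc0 hu).tsum_le_tsum
      (fun i => mul_le_of_le_one_right (hc0 i) (hu i).2) hc⟩

theorem abs_tsum_mul_sub_tsum_mul_le (hc : Summable c) (hc0 : ∀ i, 0 ≤ c i)
    (hu : ∀ i, u i ∈ Set.Icc 0 1) (hv : ∀ i, v i ∈ Set.Icc 0 1) {t : ℝ}
    (huv : ∀ i, |u i - v i| ≤ t) :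
    |∑' i, c i * u i - ∑' i, c i * v i| ≤ (∑' i, c i) * t := by
  rw [← (summable_mul_of_mem_Icc hc hc0 hu).tsum_sub (summable_mul_of_mem_Icc hc hc0 hv)]
  refine tsum_of_norm_bounded (f := fun i => c i * u i - c i * v i) (hc.hasSum.mul_right t)
    fun i => ?_
  rw [Real.norm_eq_abs, ← mul_sub, abs_mul, abs_of_nonneg (hc0 i)]
  exact mul_le_mul_of_nonneg_left (huv i) (hc0 i)

end WeightedSum

theorem lintegral_tsum_sq_le {X ι : Type*} [MeasurableSpace X] [Countable ι] {μ : Measure X}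
    {a : ι → X → ℝ≥0∞} (ha : ∀ i, AEMeasurable (a i) μ) {b : ι → ℝ≥0∞}
    (hab : ∀ i j, ∫⁻ x, a i x * a j x ∂μ ≤ b i * b j) :
    ∫⁻ x, (∑' i, a i x) ^ 2 ∂μ ≤ (∑' i, b i) ^ 2 := by
  have hsq (s : ι → ℝ≥0∞) : (∑' i, s i) ^ 2 = ∑' i, ∑' j, s i * s j := by
    simp_rw [sq, ← ENNReal.tsum_mul_right, ← ENNReal.tsum_mul_left]
  simp_rw [hsq]
  rw [lintegral_tsum (f := fun i x => ∑' j, a i x * a j x)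
    fun i => AEMeasurable.tsum fun j => (ha i).mul (ha j)]
  refine ENNReal.tsum_le_tsum fun i => ?_
  rw [lintegral_tsum (f := fun j x => a i x * a j x) fun j => (ha i).mul (ha j)]
  exact ENNReal.tsum_le_tsum (hab i)

theorem div_sqrt_mul_div_sqrt_mul_le {a b s t M : ℝ} (ha : 0 ≤ a) (hb : 0 ≤ b) (hs : 0 < s)
    (ht : 0 < t) (hM : 0 ≤ M) (hMs : M ≤ s) (hMt : M ≤ t) :
    a / √s * (b / √t) * M ≤ a * b := by
  have hM' : M ≤ √s * √t := by
    rw [← Real.sqrt_mul_self hM, ← Real.sqrt_mul hs.le]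
    exact Real.sqrt_le_sqrt (mul_le_mul hMs hMt hM hs.le)
  rw [div_mul_div_comm, div_mul_eq_mul_div, div_le_iff₀ (by positivity)]
  exact mul_le_mul_of_nonneg_left hM' (mul_nonneg ha hb)

section Construction

variable {X : Type*} [MeasurableSpace X]

/-- The paper's `κ_i`, for `K = K_i`. -/
noncomputable def kappa (d : X → X → ℝ≥0∞) (m : Measure X) (ε : ℝ) (K : Set X) : ℝ :=
  (m {x | (⨅ y ∈ K, d x y) < ENNReal.ofReal ε}).toReal

noncomputable def weight (d : X → X → ℝ≥0∞) (m : Measure X) (ε : ℝ) (K : ℕ → Set X) (i : ℕ) :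
    ℝ :=
  2 ^ (-(i : ℤ) - 2) * ε / (3 * √(kappa d m ε (K i)))

/-- The paper's `φ`, with weights `2^{-i-2}` instead of `2^{-i-1}`. -/
noncomputable def bumpSeries (d : X → X → ℝ≥0∞) (m : Measure X) (ε : ℝ) (K : ℕ → Set X)
    (x : X) : ℝ :=
  ∑' i, weight d m ε K i * bump ε (⨅ y ∈ K i, d x y)

variable {d : X → X → ℝ≥0∞} {m : Measure X} {ε : ℝ} {K : ℕ → Set X}

theorem weight_pos (hε : 0 < ε) {i : ℕ} (hκ : 1 ≤ kappa d m ε (K i)) : 0 < weight d m ε K i :=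
  div_pos (by positivity) (by linarith [Real.one_le_sqrt.2 hκ])

theorem weight_eq_div_sqrt (i : ℕ) :
    weight d m ε K i = 2 ^ (-(i : ℤ) - 2) * ε / 3 / √(kappa d m ε (K i)) :=
  div_mul_eq_div_div _ _ _

theorem weight_le (hε : 0 < ε) {i : ℕ} (hκ : 1 ≤ kappa d m ε (K i)) :
    weight d m ε K i ≤ 2 ^ (-(i : ℤ) - 2) * ε / 3 := by
  rw [weight_eq_div_sqrt]
  exact div_le_self (by positivity) (Real.one_le_sqrt.2 hκ)

theorem hasSum_two_zpow_mul_div_three (ε : ℝ) :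
    HasSum (fun i : ℕ => 2 ^ (-(i : ℤ) - 2) * ε / 3) (ε / 6) := by
  have h := (hasSum_two_zpow_neg_sub_two.mul_right ε).div_const 3
  rwa [show 1 / 2 * ε / 3 = ε / 6 by ring] at h

theorem summable_weight (hε : 0 < ε) (hκ : ∀ i, 1 ≤ kappa d m ε (K i)) :
    Summable (weight d m ε K) :=
  (hasSum_two_zpow_mul_div_three ε).summable.of_nonneg_of_le
    (fun i => (weight_pos hε (hκ i)).le) fun i => weight_le hε (hκ i)

theorem tsum_weight_le (hε : 0 < ε) (hκ : ∀ i, 1 ≤ kappa d m ε (K i)) :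
    ∑' i, weight d m ε K i ≤ ε / 6 :=
  hasSum_le (fun i => weight_le hε (hκ i)) (summable_weight hε hκ).hasSum
    (hasSum_two_zpow_mul_div_three ε)

theorem summable_weight_mul_bump (hε : 0 < ε) (hκ : ∀ i, 1 ≤ kappa d m ε (K i)) (x : X) :
    Summable fun i => weight d m ε K i * bump ε (⨅ y ∈ K i, d x y) :=
  summable_mul_of_mem_Icc (summable_weight hε hκ) (fun i => (weight_pos hε (hκ i)).le)
    fun _ => bump_mem_Icc _ _

theorem bumpSeries_mem_Icc (hε : 0 < ε) (hε1 : ε ≤ 1) (hκ : ∀ i, 1 ≤ kappa d m ε (K i))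
    (x : X) : bumpSeries d m ε K x ∈ Set.Icc 0 1 := by
  have h := tsum_mul_mem_Icc (summable_weight hε hκ) (fun i => (weight_pos hε (hκ i)).le)
    fun i => bump_mem_Icc ε (⨅ y ∈ K i, d x y)
  exact ⟨h.1, h.2.trans ((tsum_weight_le hε hκ).trans (by linarith))⟩

theorem measurable_bumpSeries (hδ : ∀ i, Measurable fun x => ⨅ y ∈ K i, d x y) :
    Measurable (bumpSeries d m ε K) :=
  Measurable.tsum fun i => ((measurable_bump ε).comp (hδ i)).const_mul _

theorem abs_bumpSeries_sub_le (hsymm : ∀ x y, d x y = d y x)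
    (htri : ∀ x y z, d x z ≤ d x y + d y z) (hε : 0 < ε) (hκ : ∀ i, 1 ≤ kappa d m ε (K i))
    {x y : X} (hxy : d x y < ⊤) :
    |bumpSeries d m ε K x - bumpSeries d m ε K y| ≤ (d x y).toReal := by
  have hbump (i : ℕ) : |bump ε (⨅ z ∈ K i, d x z) - bump ε (⨅ z ∈ K i, d y z)| ≤
      3 / (2 * ε) * (d x y).toReal :=
    abs_bump_sub_le hε hxy.ne ((biInf_le_add_biInf htri (K i) x y).trans_eq (add_comm _ _))
      ((biInf_le_add_biInf htri (K i) y x).trans_eq (by rw [hsymm, add_comm]))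
  calc |bumpSeries d m ε K x - bumpSeries d m ε K y|
      ≤ (∑' i, weight d m ε K i) * (3 / (2 * ε) * (d x y).toReal) :=
        abs_tsum_mul_sub_tsum_mul_le (summable_weight hε hκ) (fun i => (weight_pos hε (hκ i)).le)
          (fun _ => bump_mem_Icc _ _) (fun _ => bump_mem_Icc _ _) hbump
    _ ≤ ε / 6 * (3 / (2 * ε) * (d x y).toReal) := by gcongr; exact tsum_weight_le hε hκ
    _ = (d x y).toReal / 4 := by field_simp; ring
    _ ≤ (d x y).toReal := by linarith [(d x y).toReal_nonneg]

theorem weight_le_bumpSeries (hε : 0 < ε) (hκ : ∀ i, 1 ≤ kappa d m ε (K i)) (i : ℕ) {x : X}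
    (hx : (⨅ y ∈ K i, d x y) < ENNReal.ofReal (ε / 3)) :
    weight d m ε K i ≤ bumpSeries d m ε K x := by
  have h := (summable_weight_mul_bump hε hκ x).le_tsum i fun j _ =>
    mul_nonneg (weight_pos hε (hκ j)).le (bump_mem_Icc _ _).1
  rwa [bump_eq_one hε hx, mul_one] at h

theorem ae_pos_bumpSeries (hrefl : ∀ x, d x x = 0) (hε : 0 < ε)
    (hκ : ∀ i, 1 ≤ kappa d m ε (K i)) (hK : m (⋃ i, K i)ᶜ = 0) :
    ∀ᵐ x ∂m, 0 < bumpSeries d m ε K x := by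
  filter_upwards [measure_eq_zero_iff_ae_notMem.1 hK] with x hx
  obtain ⟨i, hi⟩ := Set.mem_iUnion.1 (Set.notMem_compl_iff.1 hx)
  have hδ : (⨅ y ∈ K i, d x y) < ENNReal.ofReal (ε / 3) :=
    (iInf₂_le x hi).trans_lt (by rw [hrefl]; exact ENNReal.ofReal_pos.2 (by positivity))
  exact (weight_pos hε (hκ i)).trans_le (weight_le_bumpSeries hε hκ i hδ)

theorem lintegral_weight_mul_bump_mul_le (hε : 0 < ε) (hκ : ∀ i, 1 ≤ kappa d m ε (K i))
    (i j : ℕ) :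
    ∫⁻ x, ENNReal.ofReal (weight d m ε K i * bump ε (⨅ y ∈ K i, d x y)) *
        ENNReal.ofReal (weight d m ε K j * bump ε (⨅ y ∈ K j, d x y)) ∂m ≤
      ENNReal.ofReal (2 ^ (-(i : ℤ) - 2) * ε / 3) *
        ENNReal.ofReal (2 ^ (-(j : ℤ) - 2) * ε / 3) := by
  set A : ℕ → Set X := fun i => {x | (⨅ y ∈ K i, d x y) < ENNReal.ofReal ε}
  have hfin (i : ℕ) : m (A i) ≠ ∞ := (ENNReal.toReal_pos_iff.1 (one_pos.trans_le (hκ i))).2.ne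
  have hM {i j : ℕ} : (m (A i ∩ A j)).toReal ≤ kappa d m ε (K i) :=
    ENNReal.toReal_mono (hfin i) (measure_mono Set.inter_subset_left)
  have hw (i : ℕ) := (weight_pos hε (hκ i)).le
  calc _ ≤ ∫⁻ x, (A i ∩ A j).indicator (fun _ => ENNReal.ofReal (weight d m ε K i) *
          ENNReal.ofReal (weight d m ε K j)) x ∂m := by
        refine lintegral_mono fun x => ?_
        rw [Set.inter_indicator_mul]
        exact mul_le_mul' (ofReal_mul_bump_le_indicator hε (hw i) (fun x => ⨅ y ∈ K i, d x y) x)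
          (ofReal_mul_bump_le_indicator hε (hw j) (fun x => ⨅ y ∈ K j, d x y) x)
    _ ≤ ENNReal.ofReal (weight d m ε K i) * ENNReal.ofReal (weight d m ε K j) * m (A i ∩ A j) :=
        lintegral_indicator_const_le _ _
    _ = ENNReal.ofReal (weight d m ε K i * weight d m ε K j * (m (A i ∩ A j)).toReal) := by
        rw [ENNReal.ofReal_mul (mul_nonneg (hw i) (hw j)), ENNReal.ofReal_mul (hw i),
          ENNReal.ofReal_toReal (measure_ne_top_of_subset Set.inter_subset_left (hfin i))]
    _ ≤ _ := by
        rw [← ENNReal.ofReal_mul (by positivity), weight_eq_div_sqrt, weight_eq_div_sqrt]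
        refine ENNReal.ofReal_le_ofReal (div_sqrt_mul_div_sqrt_mul_le (by positivity)
          (by positivity) (by linarith [hκ i]) (by linarith [hκ j]) ENNReal.toReal_nonneg hM ?_)
        rw [Set.inter_comm]
        exact hM

theorem lintegral_sq_bumpSeries_le_one (hε : 0 < ε) (hε1 : ε ≤ 1)
    (hκ : ∀ i, 1 ≤ kappa d m ε (K i)) (hδ : ∀ i, Measurable fun x => ⨅ y ∈ K i, d x y) :
    ∫⁻ x, ENNReal.ofReal (bumpSeries d m ε K x ^ 2) ∂m ≤ 1 := by
  have hsq (x : X) : ENNReal.ofReal (bumpSeries d m ε K x ^ 2) =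
      (∑' i, ENNReal.ofReal (weight d m ε K i * bump ε (⨅ y ∈ K i, d x y))) ^ 2 := by
    rw [ENNReal.ofReal_pow (bumpSeries_mem_Icc hε hε1 hκ x).1, bumpSeries,
      ENNReal.ofReal_tsum_of_nonneg
        (fun i => mul_nonneg (weight_pos hε (hκ i)).le (bump_mem_Icc _ _).1)
        (summable_weight_mul_bump hε hκ x)]
  have hsum : ∑' i : ℕ, ENNReal.ofReal (2 ^ (-(i : ℤ) - 2) * ε / 3) = ENNReal.ofReal (ε / 6) := by
    rw [← ENNReal.ofReal_tsum_of_nonneg (fun i => by positivity)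
      (hasSum_two_zpow_mul_div_three ε).summable, (hasSum_two_zpow_mul_div_three ε).tsum_eq]
  calc ∫⁻ x, ENNReal.ofReal (bumpSeries d m ε K x ^ 2) ∂m
      = ∫⁻ x, (∑' i, ENNReal.ofReal (weight d m ε K i * bump ε (⨅ y ∈ K i, d x y))) ^ 2 ∂m :=
        lintegral_congr hsq
    _ ≤ (∑' i : ℕ, ENNReal.ofReal (2 ^ (-(i : ℤ) - 2) * ε / 3)) ^ 2 :=
        lintegral_tsum_sq_le
          (fun i => (((measurable_bump ε).comp (hδ i)).const_mul _).ennreal_ofReal.aemeasurable)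
          (lintegral_weight_mul_bump_mul_le hε hκ)
    _ ≤ 1 := by
        rw [hsum, ← ENNReal.ofReal_pow (by positivity)]
        exact ENNReal.ofReal_le_one.2 (by nlinarith)

end Construction

theorem density_construction_general {X : Type*} [TopologicalSpace X]
    [MeasurableSpace X] [BorelSpace X]
    (d : X → X → ℝ≥0∞)
    (hrefl : ∀ x, d x x = 0)
    (hsymm : ∀ x y, d x y = d y x)
    (htri : ∀ x y z, d x z ≤ d x y + d y z)
    (hlsc : LowerSemicontinuous fun p : X × X => d p.1 p.2)
    (m : Measure X)
    (K : ℕ → Set X) (hKcpt : ∀ i, IsCompact (K i))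
    (hKcover : m (⋃ i, K i)ᶜ = 0)
    (ε : ℝ) (hε0 : 0 < ε) (hε1 : ε ≤ 1)
    (hκ1 : ∀ i : ℕ, 1 ≤ m {x | (⨅ y ∈ K i, d x y) < ENNReal.ofReal ε})
    (hκfin : ∀ i : ℕ, m {x | (⨅ y ∈ K i, d x y) < ENNReal.ofReal ε} < ⊤) :
    ∃ φ : X → ℝ, Measurable φ ∧ (∀ x, φ x ∈ Set.Icc (0 : ℝ) 1) ∧
      (∫⁻ x, ENNReal.ofReal (φ x ^ 2) ∂m) ≤ 1 ∧
      (∀ x y : X, d x y < ⊤ → |φ x - φ y| ≤ (d x y).toReal) ∧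
      (∀ i : ℕ,
        0 < (2 : ℝ) ^ (-(i : ℤ) - 2) * ε /
            (3 * Real.sqrt (m {x | (⨅ y ∈ K i, d x y) < ENNReal.ofReal ε}).toReal) ∧
        ∀ x : X, (⨅ y ∈ K i, d x y) < ENNReal.ofReal (ε / 3) →
          (2 : ℝ) ^ (-(i : ℤ) - 2) * ε /
              (3 * Real.sqrt (m {x | (⨅ y ∈ K i, d x y) < ENNReal.ofReal ε}).toReal) ≤ φ x) ∧
      (∀ᵐ x ∂m, 0 < φ x) := by
  have hκ (i : ℕ) : 1 ≤ kappa d m ε (K i) := by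
    simpa [kappa] using ENNReal.toReal_mono (hκfin i).ne (hκ1 i)
  have hδ (i : ℕ) : Measurable fun x => ⨅ y ∈ K i, d x y :=
    (lowerSemicontinuous_biInf_of_isCompact hlsc (hKcpt i)).measurable
  exact ⟨bumpSeries d m ε K, measurable_bumpSeries hδ, bumpSeries_mem_Icc hε0 hε1 hκ,
    lintegral_sq_bumpSeries_le_one hε0 hε1 hκ hδ,
    fun _ _ => abs_bumpSeries_sub_le hsymm htri hε0 hκ,
    fun i => ⟨weight_pos hε0 (hκ i), fun _ => weight_le_bumpSeries hε0 hκ i⟩,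
    ae_pos_bumpSeries hrefl hε0 hκ hKcover⟩

/-- The 'construction of a density' step in the proof of Proposition 4.5: given a
jointly lower semicontinuous extended pseudo-distance `d`, an increasing sequence
of compact sets exhausting `X` up to an `m`-negligible set, and `ε ∈ (0,1]` with
`1 ≤ κ_i := m {d(·,K_i) < ε} < ∞`, there is a Borel `[0,1]`-valued, `1`-Lipschitz
function `φ` with `∫ φ² dm ≤ 1`, bounded below by `2^{-i-2} ε/(3 √κ_i) > 0` on
`{d(·,K_i) < ε/3}`, and `m`-a.e. strictly positive. -/
theorem density_construction {X : Type*} [TopologicalSpace X]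
    [MeasurableSpace X] [BorelSpace X]
    (d : X → X → ℝ≥0∞)
    (hrefl : ∀ x, d x x = 0)
    (hsymm : ∀ x y, d x y = d y x)
    (htri : ∀ x y z, d x z ≤ d x y + d y z)
    (hlsc : LowerSemicontinuous fun p : X × X => d p.1 p.2)
    (m : Measure X)
    (K : ℕ → Set X) (hKmono : Monotone K) (hKcpt : ∀ i, IsCompact (K i))
    (hKcover : m (⋃ i, K i)ᶜ = 0)
    (ε : ℝ) (hε0 : 0 < ε) (hε1 : ε ≤ 1)
    (hκ1 : ∀ i : ℕ, 1 ≤ m {x | (⨅ y ∈ K i, d x y) < ENNReal.ofReal ε})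
    (hκfin : ∀ i : ℕ, m {x | (⨅ y ∈ K i, d x y) < ENNReal.ofReal ε} < ⊤) :
    ∃ φ : X → ℝ, Measurable φ ∧ (∀ x, φ x ∈ Set.Icc (0 : ℝ) 1) ∧
      (∫⁻ x, ENNReal.ofReal (φ x ^ 2) ∂m) ≤ 1 ∧
      (∀ x y : X, d x y < ⊤ → |φ x - φ y| ≤ (d x y).toReal) ∧
      (∀ i : ℕ,
        0 < (2 : ℝ) ^ (-(i : ℤ) - 2) * ε /
            (3 * Real.sqrt (m {x | (⨅ y ∈ K i, d x y) < ENNReal.ofReal ε}).toReal) ∧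
        ∀ x : X, (⨅ y ∈ K i, d x y) < ENNReal.ofReal (ε / 3) →
          (2 : ℝ) ^ (-(i : ℤ) - 2) * ε /
              (3 * Real.sqrt (m {x | (⨅ y ∈ K i, d x y) < ENNReal.ofReal ε}).toReal) ≤ φ x) ∧
      (∀ᵐ x ∂m, 0 < φ x) :=
  density_construction_general d hrefl hsymm htri hlsc m K hKcpt hKcover ε hε0 hε1 hκ1 hκfin
end
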